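/- There is a universal constant C such that the following holds for all n, m, ℓ and ε > 0. If a property P of Boolean functions on {0,1}^n is testable with proximity parameter ε using m samples — i.e., there exists T : ({0,1}^n × {0,1})^m × {0,1}^ℓ → {0,1} such that on m i.i.d. uniform samples x_i with labels f(x_i) and a uniform seed, T outputs 1 with probability at least 2/3 whenever f ∈ P and outputs 0 with probability at least 2/3 whenever f is not in P_ε — then there exist a natural number k ≤ 2^{2^{C·m}}, a partition of {0,1}^n into disjoint parts S_1, ..., S_k, and a property Q that is k-part symmetric with respect to this partition, such that P ⊆ Q ⊆ P_ε. -/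

import Mathlib

/-- Probability that the randomized tester `T` outputs `1` (Accept) on `m` i.i.d.
uniform samples from `{0,1}^n` labeled by `f`, with a uniform seed in `{0,1}^ℓ`. -/
noncomputable def acceptProb (n m l : ℕ)
    (T : (Fin m → (Fin n → Bool)) → (Fin m → Bool) → (Fin l → Bool) → Bool)
    (f : (Fin n → Bool) → Bool) : ℝ :=
  (∑ x : Fin m → (Fin n → Bool), ∑ r : Fin l → Bool,
      if T x (fun i => f (x i)) r then (1 : ℝ) else 0) / ((2 : ℝ) ^ (n * m) * 2 ^ l)

/-- Normalized Hamming distance between Boolean functions on `{0,1}^n`. -/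
noncomputable def fdist (n : ℕ) (f g : (Fin n → Bool) → Bool) : ℝ :=
  ((Finset.univ.filter fun x => f x ≠ g x).card : ℝ) / 2 ^ n

/-- `closeTo n P ε` is `P_ε`: the Boolean functions within distance `ε` of `P`. -/
def closeTo (n : ℕ) (P : Set ((Fin n → Bool) → Bool)) (ε : ℝ) :
    Set ((Fin n → Bool) → Bool) :=
  {f | ∃ g ∈ P, fdist n f g ≤ ε}

/-- `T` is a valid sample-based tester for `P` with proximity `ε`. -/
def isValidTester (n m l : ℕ) (P : Set ((Fin n → Bool) → Bool)) (ε : ℝ)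
    (T : (Fin m → (Fin n → Bool)) → (Fin m → Bool) → (Fin l → Bool) → Bool) : Prop :=
  (∀ f ∈ P, 2 / 3 ≤ acceptProb n m l T f) ∧
  (∀ f, f ∉ closeTo n P ε → acceptProb n m l T f ≤ 1 / 3)

/-- Density of `f` on the part `S`: `E_{x uniform}[f(x)·1[x ∈ S]]`. -/
noncomputable def density (n : ℕ) (S : Finset (Fin n → Bool))
    (f : (Fin n → Bool) → Bool) : ℝ :=
  (∑ x ∈ S, if f x then (1 : ℝ) else 0) / 2 ^ n

/-!
Write `V = {0,1}ⁿ × {0,1}` for labelled points and `K : Vᵐ → [0,1]` for the probability, over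
the seed, that the tester accepts a labelled sample. Then
`acceptProb f = ⟪K, 1_{Γ_f}^{⊗m}⟫ / 2^{nm}`, where `Γ_f ⊆ V` is the graph of `f`. The
Frieze–Kannan weak regularity lemma, run greedily in `ℓ²(Vᵐ)`, approximates `K` by a combination
of `B = 2^{2m+6}` indicators of boxes `A_{t,1} × ⋯ × A_{t,m}`, with error at most `2^{nm}/8`
against every box indicator. The inner product of such a box indicator with `1_{Γ_f}^{⊗m}` is
`∏ᵢ |A_{t,i} ∩ Γ_f|`, which only depends on how many ones `f` has on each atom of the partition of
`{0,1}ⁿ` generated by the `2mB` sets `{x | (x, b) ∈ A_{t,i}}`. So functions with the same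
densities on the atoms have acceptance probabilities within `1/4` of each other, and `Q` can be
taken to be the set of functions whose density vector is that of some member of `P`.
-/

open Finset
open scoped RealInnerProductSpace

section WeakRegularity

variable {E ι : Type*} [NormedAddCommGroup E] [InnerProductSpace ℝ E]

lemma norm_sub_inner_div_smul_sq (w u : E) :
    ‖w - (⟪w, u⟫ / ‖u‖ ^ 2) • u‖ ^ 2 = ‖w‖ ^ 2 - ⟪w, u⟫ ^ 2 / ‖u‖ ^ 2 := by
  rcases eq_or_ne u 0 with rfl | hu
  · simp
  have : ‖u‖ ≠ 0 := norm_ne_zero_iff.2 hu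
  rw [norm_sub_sq_real, real_inner_smul_right, norm_smul, Real.norm_eq_abs, mul_pow, sq_abs]
  field_simp
  ring

-- Each greedy step removes from `w` its projection on a badly approximated `u i`, which lowers
-- `‖w‖²` by at least `θ² / M`.
theorem exists_abs_inner_sub_sum_smul_le [Nonempty ι] (u : ι → E) {M θ : ℝ} (hθ : 0 ≤ θ)
    (hu : ∀ i, ‖u i‖ ^ 2 ≤ M) (B : ℕ) (w : E) (hw : ‖w‖ ^ 2 ≤ B * (θ ^ 2 / M)) :
    ∃ (c : Fin B → ℝ) (s : Fin B → ι), ∀ i, |⟪w - ∑ t, c t • u (s t), u i⟫| ≤ θ := by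
  induction B generalizing w with
  | zero =>
    have hw0 : w = 0 := by simpa using hw
    exact ⟨Fin.elim0, Fin.elim0, fun i => by simp [hw0, hθ]⟩
  | succ B ih =>
    by_cases hsmall : ∀ i, |⟪w, u i⟫| ≤ θ
    · exact ⟨0, fun _ => Classical.arbitrary ι, by simpa using hsmall⟩
    obtain ⟨i₀, hi₀⟩ := not_forall.1 hsmall
    rw [not_le] at hi₀
    have hu₀ : 0 < ‖u i₀‖ ^ 2 := by
      have : u i₀ ≠ 0 := by
        rintro h
        simp only [h, inner_zero_right, abs_zero] at hi₀
        linarith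
      positivity
    have hgain : θ ^ 2 / M ≤ ⟪w, u i₀⟫ ^ 2 / ‖u i₀‖ ^ 2 :=
      calc θ ^ 2 / M ≤ θ ^ 2 / ‖u i₀‖ ^ 2 := div_le_div_of_nonneg_left (sq_nonneg θ) hu₀ (hu i₀)
        _ ≤ ⟪w, u i₀⟫ ^ 2 / ‖u i₀‖ ^ 2 :=
          div_le_div_of_nonneg_right (sq_le_sq.2 (by rw [abs_of_nonneg hθ]; exact hi₀.le)) hu₀.le
    obtain ⟨c, s, hcs⟩ := ih (w - (⟪w, u i₀⟫ / ‖u i₀‖ ^ 2) • u i₀) (by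
      rw [norm_sub_inner_div_smul_sq]
      push_cast at hw
      linarith)
    refine ⟨Fin.cons (⟪w, u i₀⟫ / ‖u i₀‖ ^ 2) c, Fin.cons i₀ s, fun i => ?_⟩
    simpa [Fin.sum_univ_succ, sub_sub] using hcs i

end WeakRegularity

lemma EuclideanSpace.norm_sq_le_card {α : Type*} [Fintype α] {v : EuclideanSpace ℝ α}
    (hv : ∀ y, |v y| ≤ 1) : ‖v‖ ^ 2 ≤ Fintype.card α := by
  rw [EuclideanSpace.norm_sq_eq, ← Finset.card_univ, ← nsmul_one, ← sum_const]
  gcongr with y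
  simpa [sq_abs] using pow_le_one₀ (abs_nonneg _) (hv y) (n := 2)

section IndicatorVec

variable {α : Type*} [DecidableEq α]

def indicatorVec (A : Finset α) : EuclideanSpace ℝ α :=
  WithLp.toLp 2 fun y => if y ∈ A then 1 else 0

lemma abs_indicatorVec_le_one (A : Finset α) (y : α) : |indicatorVec A y| ≤ 1 := by
  by_cases hy : y ∈ A <;> simp [indicatorVec, hy]

variable [Fintype α]

lemma inner_indicatorVec (v : EuclideanSpace ℝ α) (A : Finset α) :
    ⟪v, indicatorVec A⟫ = ∑ y ∈ A, v y := by
  simp [PiLp.inner_apply, indicatorVec, sum_ite_mem]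

lemma inner_indicatorVec_indicatorVec (A A' : Finset α) :
    ⟪indicatorVec A, indicatorVec A'⟫ = #(A ∩ A') := by
  rw [inner_indicatorVec, inter_comm, ← filter_mem_eq_inter, ← sum_boole]
  rfl

lemma inner_indicatorVec_piFinset {κ : Type*} [Fintype κ] [DecidableEq κ] (U U' : κ → Finset α) :
    ⟪indicatorVec (Fintype.piFinset U), indicatorVec (Fintype.piFinset U')⟫ =
      ∏ i, (#(U i ∩ U' i) : ℝ) := by
  rw [inner_indicatorVec_indicatorVec, ← Fintype.piFinset_inter, Fintype.card_piFinset]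
  push_cast
  rfl

end IndicatorVec

section GraphFibers

variable {X ι : Type*} [Fintype X]

def graphFinset (f : X → Bool) : Finset (X × Bool) :=
  univ.filter fun v => f v.1 = v.2

lemma card_inter_graphFinset [DecidableEq X] (A : Finset (X × Bool)) (f : X → Bool) :
    #(A ∩ graphFinset f) = #{x | (x, f x) ∈ A} := by
  refine card_nbij' Prod.fst (fun x => (x, f x)) ?_ ?_ ?_ fun _ _ => rfl
  all_goals intro v hv; simp_all [graphFinset]

theorem sum_comp_eq_of_card_fiber_eq [DecidableEq ι] [Fintype ι] {M : Type*} [AddCommMonoid M]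
    (τ : X → ι) {f g : X → Bool}
    (h : ∀ j, #{x ∈ univ.filter (τ · = j) | f x} = #{x ∈ univ.filter (τ · = j) | g x})
    (ψ : ι → Bool → M) : ∑ x, ψ (τ x) (f x) = ∑ x, ψ (τ x) (g x) := by
  have hsplit : ∀ (p : X → Bool) j, ∑ x ∈ univ.filter (τ · = j), ψ (τ x) (p x) =
      #{x ∈ univ.filter (τ · = j) | p x} • ψ j true +
        #{x ∈ univ.filter (τ · = j) | ¬ p x} • ψ j false := by
    intro p j
    rw [← sum_const, ← sum_const, ← sum_ite]
    refine sum_congr rfl fun x hx => ?_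
    rw [(mem_filter.1 hx).2]
    cases p x <;> rfl
  have hneg : ∀ j,
      #{x ∈ univ.filter (τ · = j) | ¬ f x} = #{x ∈ univ.filter (τ · = j) | ¬ g x} := by
    intro j
    have hf := card_filter_add_card_filter_not (s := univ.filter (τ · = j)) (fun x => f x)
    have hg := card_filter_add_card_filter_not (s := univ.filter (τ · = j)) (fun x => g x)
    have := h j
    omega
  rw [← sum_fiberwise univ τ, ← sum_fiberwise univ τ (fun x => ψ (τ x) (g x))]
  simp only [hsplit, h, hneg]

theorem card_inter_graphFinset_eq_of_card_fiber_eq [DecidableEq X] [DecidableEq ι] [Fintype ι]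
    (τ : X → ι) {f g : X → Bool}
    (h : ∀ j, #{x ∈ univ.filter (τ · = j) | f x} = #{x ∈ univ.filter (τ · = j) | g x})
    (A : Finset (X × Bool)) (φ : ι → Bool → Bool) (hA : ∀ x b, (x, b) ∈ A ↔ φ (τ x) b) :
    #(A ∩ graphFinset f) = #(A ∩ graphFinset g) := by
  simp only [card_inter_graphFinset, card_filter, hA]
  exact sum_comp_eq_of_card_fiber_eq τ h fun j b => if φ j b then 1 else 0

end GraphFibers

section Tester

variable {n m l : ℕ}

noncomputable def acceptKernel
    (T : (Fin m → (Fin n → Bool)) → (Fin m → Bool) → (Fin l → Bool) → Bool) :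
    EuclideanSpace ℝ (Fin m → (Fin n → Bool) × Bool) :=
  WithLp.toLp 2 fun y =>
    (∑ r : Fin l → Bool, if T (fun i => (y i).1) (fun i => (y i).2) r then (1 : ℝ) else 0) / 2 ^ l

lemma abs_acceptKernel_le_one
    (T : (Fin m → (Fin n → Bool)) → (Fin m → Bool) → (Fin l → Bool) → Bool)
    (y : Fin m → (Fin n → Bool) × Bool) : |acceptKernel T y| ≤ 1 := by
  have hcard : (#{r | T (fun i => (y i).1) (fun i => (y i).2) r} : ℝ) ≤ 2 ^ l := by
    exact_mod_cast (card_filter_le _ _).trans (by simp)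
  simp only [acceptKernel, sum_boole]
  rw [abs_of_nonneg (by positivity)]
  exact div_le_one_of_le₀ hcard (by positivity)

lemma acceptProb_eq_inner
    (T : (Fin m → (Fin n → Bool)) → (Fin m → Bool) → (Fin l → Bool) → Bool)
    (f : (Fin n → Bool) → Bool) :
    acceptProb n m l T f =
      ⟪acceptKernel T, indicatorVec (Fintype.piFinset fun _ => graphFinset f)⟫ / 2 ^ (n * m) := by
  have hgraph : ∑ y ∈ Fintype.piFinset (fun _ => graphFinset f), acceptKernel T y =
      ∑ x : Fin m → (Fin n → Bool), acceptKernel T fun i => (x i, f (x i)) := by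
    have hfst : ∀ y ∈ Fintype.piFinset (fun _ : Fin m => graphFinset f),
        (fun i => ((y i).1, f (y i).1)) = y := by
      intro y hy
      simp only [Fintype.mem_piFinset, graphFinset, mem_filter] at hy
      exact funext fun i => Prod.ext rfl (hy i).2
    exact sum_nbij' (fun y i => (y i).1) (fun x i => (x i, f (x i))) (by simp)
      (by simp [graphFinset]) hfst (by simp) fun y hy => congrArg _ (hfst y hy).symm
  rw [inner_indicatorVec, hgraph, acceptProb, mul_comm, ← div_div, sum_div]
  rfl

lemma exists_acceptKernel_approx
    (T : (Fin m → (Fin n → Bool)) → (Fin m → Bool) → (Fin l → Bool) → Bool) :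
    ∃ (c : Fin (2 ^ (2 * m + 6)) → ℝ)
      (S : Fin (2 ^ (2 * m + 6)) → Fin m → Finset ((Fin n → Bool) × Bool)),
      ∀ U : Fin m → Finset ((Fin n → Bool) × Bool),
        |⟪acceptKernel T - ∑ t, c t • indicatorVec (Fintype.piFinset (S t)),
          indicatorVec (Fintype.piFinset U)⟫| ≤ 2 ^ (n * m) / 8 := by
  -- `B = 2^(2m+6)` is `N² / θ²` for `N = |Vᵐ| = 2^(nm+m)` and `θ = 2^(nm)/8`.
  set N : ℝ := ↑(Fintype.card (Fin m → (Fin n → Bool) × Bool))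
  have hN : N = 2 ^ (n * m) * 2 ^ m := by simp [N, mul_pow, pow_mul]
  refine exists_abs_inner_sub_sum_smul_le (fun U => indicatorVec (Fintype.piFinset U))
    (M := N) (by positivity)
    (fun U => EuclideanSpace.norm_sq_le_card (abs_indicatorVec_le_one _)) _ _ ?_
  calc ‖acceptKernel T‖ ^ 2 ≤ N := EuclideanSpace.norm_sq_le_card (abs_acceptKernel_le_one T)
    _ = _ := by
      rw [hN]
      push_cast
      field_simp
      ring

lemma card_filter_eq_of_density_eq {S : Finset (Fin n → Bool)} {f g : (Fin n → Bool) → Bool}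
    (h : density n S f = density n S g) : #{x ∈ S | f x} = #{x ∈ S | g x} := by
  rwa [density, density, div_left_inj' (by positivity), sum_boole, sum_boole, Nat.cast_inj] at h

lemma two_mul_mul_two_pow_le (m : ℕ) : 2 * m * 2 ^ (2 * m + 6) ≤ 2 ^ (10 * m) := by
  rcases Nat.eq_zero_or_pos m with rfl | hm
  · simp
  calc 2 * m * 2 ^ (2 * m + 6) ≤ 2 ^ (m + 1) * 2 ^ (2 * m + 6) := by
        gcongr
        rw [pow_succ, mul_comm]
        exact Nat.mul_le_mul_right 2 Nat.lt_two_pow_self.le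
    _ ≤ 2 ^ (10 * m) := by
        rw [← pow_add]
        exact Nat.pow_le_pow_right (by norm_num) (by omega)

theorem exists_partition_abs_acceptProb_sub_le
    (T : (Fin m → (Fin n → Bool)) → (Fin m → Bool) → (Fin l → Bool) → Bool) :
    ∃ (k : ℕ) (S : Fin k → Finset (Fin n → Bool)), k ≤ 2 ^ 2 ^ (10 * m) ∧
      (∀ i j, i ≠ j → Disjoint (S i) (S j)) ∧ univ.biUnion S = univ ∧
      ∀ f g, (∀ j, density n (S j) f = density n (S j) g) →
        |acceptProb n m l T f - acceptProb n m l T g| ≤ 1 / 4 := by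
  obtain ⟨c, A, happrox⟩ := exists_acceptKernel_approx T
  let σ (x : Fin n → Bool) : Fin (2 ^ (2 * m + 6)) → Fin m → Bool → Bool :=
    fun t i b => decide ((x, b) ∈ A t i)
  let e := Fintype.equivFin (Fin (2 ^ (2 * m + 6)) → Fin m → Bool → Bool)
  refine ⟨_, fun j => univ.filter fun x => e (σ x) = j, ?_, ?_, ?_, fun f g hfg => ?_⟩
  · calc Fintype.card (Fin (2 ^ (2 * m + 6)) → Fin m → Bool → Bool)
        = 2 ^ (2 * m * 2 ^ (2 * m + 6)) := by simp [pow_mul]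
      _ ≤ 2 ^ 2 ^ (10 * m) := Nat.pow_le_pow_right two_pos (two_mul_mul_two_pow_le m)
  · exact fun i j hij => disjoint_filter.2 fun x _ hi hj => hij (hi ▸ hj)
  · exact biUnion_filter_eq_of_maps_to fun x _ => mem_univ _
  set box := fun h : (Fin n → Bool) → Bool =>
    indicatorVec (Fintype.piFinset fun _ : Fin m => graphFinset h)
  set D := ∑ t, c t • indicatorVec (Fintype.piFinset (A t))
  have hD : ⟪D, box f⟫ = ⟪D, box g⟫ := by
    simp only [D, box, sum_inner, real_inner_smul_left, inner_indicatorVec_piFinset]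
    refine sum_congr rfl fun t _ => congrArg _ (prod_congr rfl fun i _ => ?_)
    exact_mod_cast card_inter_graphFinset_eq_of_card_fiber_eq (fun x => e (σ x))
      (fun j => card_filter_eq_of_density_eq (hfg j)) _ (fun j b => e.symm j t i b) (by simp [σ])
  have hpos : (0 : ℝ) < 2 ^ (n * m) := by positivity
  rw [acceptProb_eq_inner, acceptProb_eq_inner, ← sub_div, abs_div, abs_of_pos hpos]
  calc |⟪acceptKernel T, box f⟫ - ⟪acceptKernel T, box g⟫| / 2 ^ (n * m)
      = |⟪acceptKernel T - D, box f⟫ - ⟪acceptKernel T - D, box g⟫| / 2 ^ (n * m) := by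
        rw [inner_sub_left, inner_sub_left, hD, sub_sub_sub_cancel_right]
    _ ≤ (2 ^ (n * m) / 8 + 2 ^ (n * m) / 8) / 2 ^ (n * m) := by
        gcongr
        exact (abs_sub _ _).trans (add_le_add (happrox _) (happrox _))
    _ = 1 / 4 := by
        field_simp
        norm_num

end Tester

/-- **Testability implies symmetry.** There is a universal constant `C` such that if a
property `P` of Boolean functions on `{0,1}^n` is testable with proximity `ε` using `m`
samples, then there are `k ≤ 2^(2^(C·m))`, a partition `S 1, …, S k` of `{0,1}^n`, and a
property `Q` that is `k`-part symmetric with respect to this partition (membership in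
`Q` depends only on the vector of densities) with `P ⊆ Q ⊆ P_ε`. -/
theorem stmt_13 : ∃ C : ℕ, 0 < C ∧
    ∀ (n m l : ℕ) (ε : ℝ), 0 < ε →
    ∀ (P : Set ((Fin n → Bool) → Bool))
      (T : (Fin m → (Fin n → Bool)) → (Fin m → Bool) → (Fin l → Bool) → Bool),
      isValidTester n m l P ε T →
      ∃ (k : ℕ) (S : Fin k → Finset (Fin n → Bool)) (Q : Set ((Fin n → Bool) → Bool)),
        k ≤ 2 ^ 2 ^ (C * m) ∧
        (∀ i j, i ≠ j → Disjoint (S i) (S j)) ∧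
        Finset.univ.biUnion S = Finset.univ ∧
        (∀ f g : (Fin n → Bool) → Bool,
          (∀ j, density n (S j) f = density n (S j) g) → (f ∈ Q ↔ g ∈ Q)) ∧
        P ⊆ Q ∧ Q ⊆ closeTo n P ε := by
  refine ⟨10, by norm_num, fun n m l ε _ P T hT => ?_⟩
  obtain ⟨k, S, hk, hdisj, hcover, hclose⟩ := exists_partition_abs_acceptProb_sub_le T
  refine ⟨k, S, {g | ∃ f ∈ P, ∀ j, density n (S j) f = density n (S j) g}, hk, hdisj, hcover,
    fun f g hfg => ?_, fun f hf => ⟨f, hf, fun _ => rfl⟩, ?_⟩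
  · exact ⟨fun ⟨h, hP, hd⟩ => ⟨h, hP, fun j => (hd j).trans (hfg j)⟩,
      fun ⟨h, hP, hd⟩ => ⟨h, hP, fun j => (hd j).trans (hfg j).symm⟩⟩
  · rintro g ⟨f, hf, hd⟩
    by_contra hg
    linarith [hT.1 f hf, hT.2 g hg, (le_abs_self _).trans (hclose f g hd)]
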